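/- For any integer t ≥ 1, if a finite simple graph G satisfies Tr(G) ≥ t, then G contains some t-atom as a subgraph. -/

import Mathlib

/-- `A` dominates `B` in `G`: every vertex of `B` has a neighbour in `A`. -/
def SimpleGraph.Dominates {V : Type*} (G : SimpleGraph V) (A B : Finset V) : Prop :=
  ∀ b ∈ B, ∃ a ∈ A, G.Adj a b

/-- `P : Fin k → Finset V` is a transitive `k`-partition of `G`. -/
def SimpleGraph.IsTransitivePartition {V : Type*} (G : SimpleGraph V)
    {k : ℕ} (P : Fin k → Finset V) : Prop :=
  (∀ i, (P i).Nonempty) ∧ (∀ v : V, ∃! i, v ∈ P i) ∧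
  (∀ i j : Fin k, i < j → G.Dominates (P i) (P j))

/-- The transitivity `Tr(G)`: the largest `k` admitting a transitive `k`-partition. -/
noncomputable def SimpleGraph.transitivity {V : Type*} [Fintype V] (G : SimpleGraph V) : ℕ :=
  sSup {k : ℕ | ∃ P : Fin k → Finset V, G.IsTransitivePartition P}

/-- `H` is (isomorphic to) a subgraph of `G`. -/
def ContainsSubgraph {α β : Type*} (H : SimpleGraph α) (G : SimpleGraph β) : Prop :=
  ∃ f : α → β, Function.Injective f ∧ ∀ a b, H.Adj a b → G.Adj (f a) (f b)

/-- `H` is (isomorphic to) an induced subgraph of `G`. -/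
def ContainsInduced {α β : Type*} (H : SimpleGraph α) (G : SimpleGraph β) : Prop :=
  Nonempty (H ↪g G)

/-- The complete bipartite graph `K_{t,t}`. -/
def Ktt (t : ℕ) : SimpleGraph (Fin t ⊕ Fin t) := completeBipartiteGraph (Fin t) (Fin t)

/-- `K_{t,t}` minus one edge. -/
def KttMinusE (t : ℕ) : SimpleGraph (Fin t ⊕ Fin t) :=
  (Ktt t).deleteEdges {e | ∃ h : 0 < t, e = s(Sum.inl ⟨0, h⟩, Sum.inr ⟨0, h⟩)}

/-- A graph on `Fin m ⊕ Fin n` is a bipartite chain graph (w.r.t. the canonical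
orderings of the two sides): edges only go between the two sides, and
neighbourhoods are nested along each ordering. -/
def IsBipartiteChain {m n : ℕ} (G : SimpleGraph (Fin m ⊕ Fin n)) : Prop :=
  (∀ i j : Fin m, ¬ G.Adj (Sum.inl i) (Sum.inl j)) ∧
  (∀ i j : Fin n, ¬ G.Adj (Sum.inr i) (Sum.inr j)) ∧
  (∀ i j : Fin m, i ≤ j → ∀ y : Fin n, G.Adj (Sum.inl j) (Sum.inr y) → G.Adj (Sum.inl i) (Sum.inr y)) ∧
  (∀ i j : Fin n, i ≤ j → ∀ x : Fin m, G.Adj (Sum.inl x) (Sum.inr j) → G.Adj (Sum.inl x) (Sum.inr i))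


/-- One step of the `t`-atom construction: starting from the graph `H` on `α`,
add an independent set `Fin r` of new vertices, a perfect matching between the new
vertices and the `r`-element subset `W = range w` of the old vertices (via the
injection `w`), and join every old vertex outside `W` to exactly one new vertex,
namely the one given by `assign`. -/
def atomStep {α : Type} (H : SimpleGraph α) {r : ℕ} (w : Fin r → α) (assign : α → Fin r) :
    SimpleGraph (α ⊕ Fin r) where
  Adj u v :=
    match u, v with
    | Sum.inl a, Sum.inl b => H.Adj a b
    | Sum.inl a, Sum.inr i => w i = a ∨ (a ∉ Set.range w ∧ assign a = i)
    | Sum.inr i, Sum.inl a => w i = a ∨ (a ∉ Set.range w ∧ assign a = i)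
    | Sum.inr _, Sum.inr _ => False
  symm := by
    constructor
    rintro (a | i) (b | j) h
    · exact h.symm
    · exact h
    · exact h
    · exact h.elim
  loopless := by
    constructor
    rintro (a | i) h
    · exact H.irrefl h
    · exact h

/-- `IsTAtom t H`: the graph `H` is a `t`-atom.  The only `1`-atom is `K₁`, the only
`2`-atom is `K₂`, and for `t ≥ 3` a `t`-atom is obtained from a `(t-1)`-atom `H` on a
vertex set of size `n` by choosing `r ∈ {1,...,n}`, an `r`-subset `W` (the range of the
injection `w`), and performing the construction `atomStep`. -/
inductive IsTAtom : ℕ → ∀ {α : Type}, SimpleGraph α → Prop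
  | one : IsTAtom 1 (⊥ : SimpleGraph (Fin 1))
  | two : IsTAtom 2 (⊤ : SimpleGraph (Fin 2))
  | step {t : ℕ} {α : Type} [Fintype α] {H : SimpleGraph α} {r : ℕ}
      (ht : 2 ≤ t) (hH : IsTAtom t H) (hr : 1 ≤ r) (hrcard : r ≤ Fintype.card α)
      (w : Fin r → α) (hw : Function.Injective w) (assign : α → Fin r) :
      IsTAtom (t + 1) (atomStep H w assign)

/-!
A transitive `t`-partition `V₁, …, V_t` is built into a `t`-atom from the back: by induction
`V₂, …, V_t` contain a copy of a `(t-1)`-atom `H`. Every vertex of that copy has a neighbour in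
`V₁`; the set `W'` of chosen neighbours becomes the new independent set, each vertex of `H` is
joined to its chosen neighbour, and one vertex of `H` per element of `W'` is taken as the matched
set `W`. With `W` a section of the map "vertex ↦ chosen neighbour", every edge of the new atom
between `H` and `W'` is an edge of this map, hence of `G`.
-/

open Function

namespace SimpleGraph

variable {V : Type} {G : SimpleGraph V}

/-- Transitive partitions of induced subgraphs: the classes need not cover `V`. -/
structure IsTransitiveFamily (G : SimpleGraph V) {k : ℕ} (P : Fin k → Finset V) : Prop where
  nonempty : ∀ i, (P i).Nonempty
  pairwise_disjoint : Pairwise (Disjoint on P)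
  dominates : ∀ ⦃i j⦄, i < j → G.Dominates (P i) (P j)

lemma IsTransitivePartition.isTransitiveFamily {k : ℕ} {P : Fin k → Finset V}
    (hP : G.IsTransitivePartition P) : G.IsTransitiveFamily P where
  nonempty := hP.1
  pairwise_disjoint _ _ hij := Finset.disjoint_left.2 fun v hvi hvj =>
    hij ((hP.2.1 v).unique hvi hvj)
  dominates := hP.2.2

namespace IsTransitiveFamily

variable {k : ℕ} {P : Fin k → Finset V}

lemma comp_strictMono (hP : G.IsTransitiveFamily P) {m : ℕ} {φ : Fin m → Fin k}
    (hφ : StrictMono φ) : G.IsTransitiveFamily (P ∘ φ) where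
  nonempty i := hP.nonempty (φ i)
  pairwise_disjoint := hP.pairwise_disjoint.comp_of_injective hφ.injective
  dominates _ _ hij := hP.dominates (hφ hij)

lemma le_card [Fintype V] (hP : G.IsTransitiveFamily P) : k ≤ Fintype.card V := by
  choose v hv using hP.nonempty
  have hv_inj : Injective v := fun i j hij => by
    by_contra hne
    exact Finset.disjoint_left.1 (hP.pairwise_disjoint hne) (hv i) (hij ▸ hv j)
  simpa using Fintype.card_le_of_injective v hv_inj

end IsTransitiveFamily

lemma exists_isTransitivePartition_of_le_transitivity [Fintype V] {t : ℕ} (ht : 1 ≤ t)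
    (htr : t ≤ G.transitivity) :
    ∃ (k : ℕ) (P : Fin k → Finset V), G.IsTransitivePartition P ∧ t ≤ k := by
  set S := {k : ℕ | ∃ P : Fin k → Finset V, G.IsTransitivePartition P}
  have hS_bdd : BddAbove S := ⟨Fintype.card V, fun _ ⟨_, hP⟩ => hP.isTransitiveFamily.le_card⟩
  have hS_nonempty : S.Nonempty := by
    by_contra hS
    rw [Set.not_nonempty_iff_eq_empty] at hS
    simp [transitivity, S, hS] at htr
    omega
  obtain ⟨P, hP⟩ := Nat.sSup_mem hS_nonempty hS_bdd
  exact ⟨_, P, hP, htr⟩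

end SimpleGraph

lemma IsTAtom.finite {t : ℕ} {α : Type} {H : SimpleGraph α} (h : IsTAtom t H) : Finite α := by
  induction h <;> infer_instance

lemma IsTAtom.nonempty {t : ℕ} {α : Type} {H : SimpleGraph α} (h : IsTAtom t H) :
    Nonempty α := by
  cases h with
  | one | two => exact ⟨0⟩
  | step _ _ hr => exact ⟨Sum.inr ⟨0, hr⟩⟩

lemma exists_fin_factorization {α β : Type*} [Fintype α] (g : α → β) :
    ∃ (r : ℕ) (k : α → Fin r) (e : Fin r → β),
      r ≤ Fintype.card α ∧ Surjective k ∧ Injective e ∧ ∀ a, e (k a) = g a := by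
  classical
  let σ := Fintype.equivFin (Set.range g)
  refine ⟨_, σ ∘ Set.rangeFactorization g, Subtype.val ∘ σ.symm, Fintype.card_range_le g,
    σ.surjective.comp Set.rangeFactorization_surjective,
    Subtype.val_injective.comp σ.symm.injective, fun a => by simp [Set.rangeFactorization]⟩

section atomStep

variable {α V : Type} {H : SimpleGraph α} {G : SimpleGraph V} {r : ℕ} {k : α → Fin r}

lemma atomStep_surjInv_adj_inl_inr (hk : Surjective k) {a : α} {i : Fin r} :
    (atomStep H (surjInv hk) k).Adj (Sum.inl a) (Sum.inr i) ↔ k a = i := by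
  refine ⟨?_, fun hai => ?_⟩
  · rintro (rfl | ⟨-, rfl⟩)
    exacts [surjInv_eq hk i, rfl]
  · by_cases ha : a ∈ Set.range (surjInv hk)
    · obtain ⟨j, rfl⟩ := ha
      exact Or.inl (by rw [← hai, surjInv_eq hk j])
    · exact Or.inr ⟨ha, hai⟩

def SimpleGraph.Copy.atomStep (f : H.Copy G) (hk : Surjective k) {e : Fin r → V}
    (he : Injective e) (hfe : ∀ a i, f a ≠ e i) (hadj : ∀ a, G.Adj (f a) (e (k a))) :
    (atomStep H (surjInv hk) k).Copy G where
  toHom :=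
    { toFun := Sum.elim f e
      map_rel' := by
        rintro (a | i) (b | j) h
        · exact f.toHom.map_adj h
        · exact (atomStep_surjInv_adj_inl_inr hk).1 h ▸ hadj a
        · exact ((atomStep_surjInv_adj_inl_inr hk).1 h.symm ▸ hadj b).symm
        · exact h.elim }
  injective' := by
    rintro (a | i) (b | j) h
    · exact congrArg Sum.inl (f.injective h)
    · exact (hfe a j h).elim
    · exact (hfe b i h.symm).elim
    · exact congrArg Sum.inr (he h)

end atomStep

namespace SimpleGraph.IsTransitiveFamily

variable {V : Type} {G : SimpleGraph V}

lemma exists_atom_copy_succ {t : ℕ} {P : Fin (t + 1) → Finset V} (hP : G.IsTransitiveFamily P)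
    (ht : 2 ≤ t) {α : Type} {H : SimpleGraph α} (hH : IsTAtom t H) (f : H.Copy G)
    (hf : ∀ a, ∃ i : Fin t, f a ∈ P i.succ) :
    ∃ (β : Type) (H' : SimpleGraph β) (f' : H'.Copy G),
      IsTAtom (t + 1) H' ∧ ∀ b, ∃ i, f' b ∈ P i := by
  have := hH.finite
  have := hH.nonempty
  let := Fintype.ofFinite α
  have hneighbour : ∀ a, ∃ v ∈ P 0, G.Adj (f a) v := fun a => by
    obtain ⟨i, hi⟩ := hf a
    obtain ⟨v, hv, hadj⟩ := hP.dominates (Fin.succ_pos i) _ hi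
    exact ⟨v, hv, hadj.symm⟩
  choose g hg hadj using hneighbour
  obtain ⟨r, k, e, hr, hk, he, hek⟩ := exists_fin_factorization g
  have hfe : ∀ a i, f a ≠ e i := fun a i hai => by
    obtain ⟨b, rfl⟩ := hk i
    obtain ⟨j, hj⟩ := hf a
    rw [hai, hek] at hj
    exact Finset.disjoint_left.1 (hP.pairwise_disjoint (Fin.succ_ne_zero j).symm) (hg b) hj
  refine ⟨α ⊕ Fin r, _, f.atomStep hk he hfe fun a => hek a ▸ hadj a,
    .step ht hH (k (Classical.arbitrary α)).pos hr _ (injective_surjInv hk) k, ?_⟩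
  rintro (a | i)
  · obtain ⟨j, hj⟩ := hf a
    exact ⟨j.succ, hj⟩
  · obtain ⟨b, rfl⟩ := hk i
    exact ⟨0, show e (k b) ∈ P 0 from (hek b).symm ▸ hg b⟩

theorem exists_atom_copy : ∀ {t : ℕ} {P : Fin t → Finset V}, G.IsTransitiveFamily P → 1 ≤ t →
    ∃ (α : Type) (H : SimpleGraph α) (f : H.Copy G), IsTAtom t H ∧ ∀ a, ∃ i, f a ∈ P i
  | 1, P, hP, _ => by
    obtain ⟨v, hv⟩ := hP.nonempty 0
    exact ⟨Fin 1, ⊥, ⟨⟨fun _ => v, fun h => h.elim⟩, fun _ _ _ => Subsingleton.elim _ _⟩,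
      .one, fun _ => ⟨0, hv⟩⟩
  | 2, P, hP, _ => by
    obtain ⟨b, hb⟩ := hP.nonempty 1
    obtain ⟨a, ha, hab⟩ := hP.dominates (show (0 : Fin 2) < 1 by decide) b hb
    refine ⟨Fin 2, ⊤, ⟨⟨![a, b], fun {i j} hij => ?_⟩, fun i j hij => ?_⟩, .two, fun i => ?_⟩
    · fin_cases i <;> fin_cases j <;> simp_all [hab.symm]
    · fin_cases i <;> fin_cases j <;> simp at hij ⊢
      exacts [hab.ne hij, hab.ne' hij]
    · fin_cases i
      exacts [⟨0, ha⟩, ⟨1, hb⟩]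
  | t + 3, P, hP, _ => by
    obtain ⟨α, H, f, hH, hf⟩ :=
      exists_atom_copy (hP.comp_strictMono (Fin.strictMono_succ)) (by omega)
    exact hP.exists_atom_copy_succ (by omega) hH f hf

end SimpleGraph.IsTransitiveFamily

/-- For any integer `t ≥ 1`, if a finite simple graph `G` satisfies `Tr(G) ≥ t`,
then `G` contains some `t`-atom as a subgraph. -/
theorem contains_atom_of_transitivity_ge {V : Type} [Fintype V] (G : SimpleGraph V)
    (t : ℕ) (ht : 1 ≤ t) (htr : t ≤ G.transitivity) :
    ∃ (α : Type) (H : SimpleGraph α), IsTAtom t H ∧ ContainsSubgraph H G := by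
  obtain ⟨k, P, hP, htk⟩ := G.exists_isTransitivePartition_of_le_transitivity ht htr
  obtain ⟨α, H, f, hH, -⟩ :=
    (hP.isTransitiveFamily.comp_strictMono (Fin.strictMono_castLE htk)).exists_atom_copy ht
  exact ⟨α, H, hH, f, f.injective, fun _ _ => f.toHom.map_adj⟩
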